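/- Let x ∈ ℂ^{n₁×n₂} whose 2D DFT never vanishes, and let s = (s₁,s₂) with gcd(s₁,n₁) = 1, gcd(s₂,n₂) = 1, and gcd(n₁,n₂) = 1. Then x is uniquely determined up to global phase by the 3n₁n₂ real numbers |F x|², |F(x + 𝒟ˢx)|², |F(x − i𝒟ˢx)|², where 𝒟ˢ is the modulation [𝒟ˢx][t₁,t₂] = e^{2πis₁t₁/n₁} e^{2πis₂t₂/n₂} x[t₁,t₂]. -/

import Mathlib

noncomputable def dft2 {n₁ n₂ : ℕ} [NeZero n₁] [NeZero n₂]
    (x : ZMod n₁ × ZMod n₂ → ℂ) (k : ZMod n₁ × ZMod n₂) : ℂ :=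
  (Real.sqrt (n₁ * n₂))⁻¹ * ∑ t : ZMod n₁ × ZMod n₂,
    x t * Complex.exp (-(2 * Real.pi * Complex.I) *
      ((k.1.val : ℂ) * (t.1.val : ℂ) / n₁ + (k.2.val : ℂ) * (t.2.val : ℂ) / n₂))

noncomputable def modulate2 {n₁ n₂ : ℕ} [NeZero n₁] [NeZero n₂] (s₁ s₂ : ℤ)
    (x : ZMod n₁ × ZMod n₂ → ℂ) : ZMod n₁ × ZMod n₂ → ℂ :=
  fun t => Complex.exp (2 * Real.pi * Complex.I *
      ((s₁ : ℂ) * (t.1.val : ℂ) / n₁ + (s₂ : ℂ) * (t.2.val : ℂ) / n₂)) * x t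

/-! By polarization, the three intensities at frequency `k` determine `x̂ k * conj (x̂ (k - s))`,
since modulation by `s` shifts the spectrum by `s`. Hence `ŷ k * x̂ (k - s) = x̂ k * ŷ (k - s)`,
i.e. the ratio `ŷ / x̂` is invariant under translation by `s`. The gcd conditions make
`s = (s₁, s₂)` a unit of the ring `ZMod n₁ × ZMod n₂ ≅ ZMod (n₁ n₂)`, so `s` generates it additively
and the ratio is a constant `c`, of modulus one since `|ŷ| = |x̂|`. Injectivity of the DFT, which
factors as two one-dimensional DFTs, gives `y = c x`. -/

open Complex ComplexConjugate Real ZMod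

theorem Complex.mul_conj_eq_of_norm_eq {a b a' b' : ℂ} (ha : ‖a'‖ = ‖a‖) (hb : ‖b'‖ = ‖b‖)
    (hadd : ‖a' + b'‖ = ‖a + b‖) (hsub : ‖a' - I * b'‖ = ‖a - I * b‖) :
    a' * conj b' = a * conj b := by
  have normSq_eq {u v : ℂ} (h : ‖u‖ = ‖v‖) : normSq u = normSq v := by
    rw [← Complex.sq_norm, ← Complex.sq_norm, h]
  have e₁ := normSq_eq ha
  have e₂ := normSq_eq hb
  have e₃ := normSq_eq hadd
  have e₄ := normSq_eq hsub
  simp only [normSq_apply, add_re, add_im, sub_re, sub_im, mul_re, mul_im, I_re, I_im]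
    at e₁ e₂ e₃ e₄
  apply Complex.ext <;> simp only [mul_re, mul_im, conj_re, conj_im] <;> linarith

theorem Complex.mul_eq_mul_of_norm_eq {a b a' b' : ℂ} (hb₀ : b ≠ 0) (ha : ‖a'‖ = ‖a‖)
    (hb : ‖b'‖ = ‖b‖) (hadd : ‖a' + b'‖ = ‖a + b‖) (hsub : ‖a' - I * b'‖ = ‖a - I * b‖) :
    a' * b = a * b' := by
  have hconj := mul_conj_eq_of_norm_eq ha hb hadd hsub
  have hN : (normSq b : ℂ) ≠ 0 := by simpa using hb₀
  have hb' : b' * conj b' = normSq b := by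
    rw [mul_conj, ← Complex.sq_norm, ← Complex.sq_norm, hb]
  apply mul_left_cancel₀ hN
  linear_combination (b * b') * hconj - (a' * b) * hb' + (a * b') * mul_conj b

theorem apply_zsmul_eq_apply_zero {G α : Type*} [AddGroup G] {φ : G → α} {s : G}
    (h : ∀ k, φ k = φ (k - s)) (m : ℤ) : φ (m • s) = φ 0 := by
  induction m using Int.induction_on with
  | zero => rw [zero_zsmul]
  | succ m ih => rw [h, add_zsmul, one_zsmul, add_sub_cancel_right, ih]
  | pred m ih => rw [← ih, h (-(m : ℤ) • s), sub_zsmul, one_zsmul, sub_eq_add_neg]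

theorem apply_eq_div_mul_of_mul_sub_eq {G K : Type*} [AddGroup G] [Field K] {f g : G → K}
    {s : G} (hs : ∀ k, ∃ m : ℤ, m • s = k) (hg : ∀ k, g k ≠ 0)
    (h : ∀ k, f k * g (k - s) = g k * f (k - s)) (k : G) : f k = f 0 / g 0 * g k := by
  have hratio : ∀ k, f k / g k = f (k - s) / g (k - s) := fun k => by
    rw [div_eq_div_iff (hg k) (hg (k - s)), h k, mul_comm]
  obtain ⟨m, rfl⟩ := hs k
  rw [← apply_zsmul_eq_apply_zero hratio m, div_mul_cancel₀ _ (hg _)]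

theorem exists_zsmul_eq_of_isUnit {R : Type*} [Ring R]
    (hR : Function.Surjective (Int.cast : ℤ → R)) {u : R} (hu : IsUnit u) (k : R) :
    ∃ m : ℤ, m • u = k := by
  obtain ⟨v, rfl⟩ := hu
  obtain ⟨m, hm⟩ := hR (k * ↑v⁻¹)
  exact ⟨m, by rw [zsmul_eq_mul, hm, Units.inv_mul_cancel_right]⟩

theorem ZMod.intCast_prod_surjective {n₁ n₂ : ℕ} (h : n₁.Coprime n₂) :
    Function.Surjective (Int.cast : ℤ → ZMod n₁ × ZMod n₂) := fun k => by
  obtain ⟨m, hm⟩ := ZMod.intCast_surjective ((chineseRemainder h).symm k)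
  exact ⟨m, by rw [← map_intCast (chineseRemainder h), hm, RingEquiv.apply_symm_apply]⟩

theorem ZMod.exists_zsmul_eq_of_gcd_eq_one {n₁ n₂ : ℕ} {s₁ s₂ : ℤ} (hs₁ : Int.gcd s₁ n₁ = 1)
    (hs₂ : Int.gcd s₂ n₂ = 1) (hn : Nat.gcd n₁ n₂ = 1) (k : ZMod n₁ × ZMod n₂) :
    ∃ m : ℤ, m • ((s₁ : ZMod n₁), (s₂ : ZMod n₂)) = k := by
  have isUnit_of_gcd {n : ℕ} {a : ℤ} (h : Int.gcd a n = 1) : IsUnit (a : ZMod n) :=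
    (coe_int_isUnit_iff_isCoprime a n).mpr (Int.isCoprime_iff_gcd_eq_one.mpr h).symm
  exact exists_zsmul_eq_of_isUnit (intCast_prod_surjective hn)
    (Prod.isUnit_iff.mpr ⟨isUnit_of_gcd hs₁, isUnit_of_gcd hs₂⟩) k

section DFT

variable {N : ℕ} [NeZero N]

theorem ZMod.stdAddChar_intCast_mul (a : ℤ) (t : ZMod N) :
    stdAddChar ((a : ZMod N) * t) = exp (2 * π * I * (a * t.val / N)) := by
  conv_lhs => rw [← natCast_zmod_val t, ← Int.cast_natCast, ← Int.cast_mul, stdAddChar_coe]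
  push_cast
  ring_nf

theorem ZMod.stdAddChar_neg_mul (t k : ZMod N) :
    stdAddChar (-(t * k)) = exp (-(2 * π * I) * (k.val * t.val / N)) := by
  have hcast : -(t * k) = ((-(k.val : ℤ) : ℤ) : ZMod N) * t := by simp [mul_comm]
  rw [hcast, stdAddChar_intCast_mul]
  push_cast
  ring_nf

theorem ZMod.dft_stdAddChar_mul_smul {E : Type*} [AddCommGroup E] [Module ℂ E] (a : ZMod N)
    (Φ : ZMod N → E) (k : ZMod N) :
    𝓕 (fun j => stdAddChar (a * j) • Φ j) k = 𝓕 Φ (k - a) := by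
  simp only [dft_apply, smul_smul, ← AddChar.map_add_eq_mul]
  congr! 3
  ring

end DFT

section DFT2

variable {n₁ n₂ : ℕ} [NeZero n₁] [NeZero n₂]

theorem dft2_eq_dft_dft (x : ZMod n₁ × ZMod n₂ → ℂ) (k : ZMod n₁ × ZMod n₂) :
    dft2 x k = (Real.sqrt (n₁ * n₂))⁻¹ * 𝓕 (fun t₁ => 𝓕 (fun t₂ => x (t₁, t₂)) k.2) k.1 := by
  simp only [dft2, dft_apply, smul_eq_mul, Finset.mul_sum, Fintype.sum_prod_type]
  congr! 3 with t₁ _ t₂ _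
  rw [stdAddChar_neg_mul, stdAddChar_neg_mul, mul_add, Complex.exp_add]
  ring

theorem modulate2_eq_smul (s₁ s₂ : ℤ) (x : ZMod n₁ × ZMod n₂ → ℂ) (t : ZMod n₁ × ZMod n₂) :
    modulate2 s₁ s₂ x t =
      stdAddChar ((s₁ : ZMod n₁) * t.1) • stdAddChar ((s₂ : ZMod n₂) * t.2) • x t := by
  rw [modulate2, mul_add, Complex.exp_add, stdAddChar_intCast_mul, stdAddChar_intCast_mul,
    smul_eq_mul, smul_eq_mul, mul_assoc]

theorem dft2_modulate2 (s₁ s₂ : ℤ) (x : ZMod n₁ × ZMod n₂ → ℂ) (k : ZMod n₁ × ZMod n₂) :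
    dft2 (modulate2 s₁ s₂ x) k = dft2 x (k - ((s₁ : ZMod n₁), (s₂ : ZMod n₂))) := by
  simp only [dft2_eq_dft_dft, modulate2_eq_smul, Prod.fst_sub, Prod.snd_sub]
  rw [← dft_stdAddChar_mul_smul]
  congr 1
  refine congrArg (fun Φ : ZMod n₁ → ℂ => 𝓕 Φ k.1) (funext fun t₁ => ?_)
  rw [← dft_stdAddChar_mul_smul]
  exact congrFun (dft_const_smul (R := ℂ) _ _) k.2

theorem dft2_injective :
    Function.Injective (dft2 : (ZMod n₁ × ZMod n₂ → ℂ) → ZMod n₁ × ZMod n₂ → ℂ) := by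
  intro x y h
  have outer (k₂ : ZMod n₂) : (fun t₁ => 𝓕 (fun t₂ => x (t₁, t₂)) k₂) =
      fun t₁ => 𝓕 (fun t₂ => y (t₁, t₂)) k₂ :=
    dft.injective <| funext fun k₁ => by
      simpa [dft2_eq_dft_dft, NeZero.ne] using congrFun h (k₁, k₂)
  funext t
  exact congrFun (dft.injective (funext fun k₂ => congrFun (outer k₂) t.1)) t.2

theorem dft2_add (x z : ZMod n₁ × ZMod n₂ → ℂ) (k : ZMod n₁ × ZMod n₂) :
    dft2 (fun t => x t + z t) k = dft2 x k + dft2 z k := by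
  simp only [dft2, add_mul, Finset.sum_add_distrib, mul_add]

theorem dft2_sub (x z : ZMod n₁ × ZMod n₂ → ℂ) (k : ZMod n₁ × ZMod n₂) :
    dft2 (fun t => x t - z t) k = dft2 x k - dft2 z k := by
  simp only [dft2, sub_mul, Finset.sum_sub_distrib, mul_sub]

theorem dft2_const_mul (c : ℂ) (x : ZMod n₁ × ZMod n₂ → ℂ) (k : ZMod n₁ × ZMod n₂) :
    dft2 (fun t => c * x t) k = c * dft2 x k := by
  simp only [dft2, Finset.mul_sum, mul_assoc, mul_left_comm c]

end DFT2

theorem phase_retrieval_2D (n₁ n₂ : ℕ) [NeZero n₁] [NeZero n₂] (s₁ s₂ : ℤ)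
    (hs₁ : Int.gcd s₁ n₁ = 1) (hs₂ : Int.gcd s₂ n₂ = 1) (hn : Nat.gcd n₁ n₂ = 1)
    (x y : ZMod n₁ × ZMod n₂ → ℂ) (hx : ∀ k, dft2 x k ≠ 0)
    (h1 : ∀ k, ‖dft2 y k‖ = ‖dft2 x k‖)
    (h2 : ∀ k, ‖dft2 (fun t => y t + modulate2 s₁ s₂ y t) k‖ =
               ‖dft2 (fun t => x t + modulate2 s₁ s₂ x t) k‖)
    (h3 : ∀ k, ‖dft2 (fun t => y t - Complex.I * modulate2 s₁ s₂ y t) k‖ =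
               ‖dft2 (fun t => x t - Complex.I * modulate2 s₁ s₂ x t) k‖) :
    ∃ c : ℂ, ‖c‖ = 1 ∧ y = fun t => c * x t := by
  set s : ZMod n₁ × ZMod n₂ := ((s₁ : ZMod n₁), (s₂ : ZMod n₂))
  have hshift (k : ZMod n₁ × ZMod n₂) :
      dft2 y k * dft2 x (k - s) = dft2 x k * dft2 y (k - s) :=
    mul_eq_mul_of_norm_eq (hx (k - s)) (h1 k) (h1 (k - s))
      (by simpa only [dft2_add, dft2_modulate2] using h2 k)
      (by simpa only [dft2_sub, dft2_const_mul, dft2_modulate2] using h3 k)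
  have hy := apply_eq_div_mul_of_mul_sub_eq (exists_zsmul_eq_of_gcd_eq_one hs₁ hs₂ hn) hx hshift
  refine ⟨dft2 y 0 / dft2 x 0, ?_, dft2_injective (funext fun k => ?_)⟩
  · rw [norm_div, h1 0, div_self (norm_ne_zero_iff.mpr (hx 0))]
  · rw [hy k, dft2_const_mul]
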